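/- arXiv:2012.01005 — 2 statements merged into one kernel-verified Lean document; each statement's English description precedes it below -/
import Mathlib

section
/- Let c, L, E, I > 0 be reals, let z ∈ ℝ, and let P ≥ 1 be an integer. Then for a = 16, Σ_{i=1}^P (16^{i−1}/(E·I)) ∫_0^{L·2^{1−i}} (Q_i(z) − c·x) · c·2^{−i}·(L·2^{1−i} − x) dx = 5·c²·L³·P/(12·E·I) − (c²·L³/(E·I)) · Σ_{i=1}^P σ(2^{i−1} z), where Q_i(z) = 4·c·L·(2^{−i} − σ(2^{i−1} z)/2^{i−1}). -/
/-- Distance from a real number to the nearest integer: σ(x) = min_{k∈ℤ} |x − k|. -/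
noncomputable def distNearInt (x : ℝ) : ℝ := ⨅ k : ℤ, |x - k|

theorem integral_sub_mul_mul_sub (A B C ℓ : ℝ) :
    ∫ x in (0:ℝ)..ℓ, (A - C * x) * (B * (ℓ - x)) = B * A * ℓ ^ 2 / 2 - B * C * ℓ ^ 3 / 6 := by
  have hpoly : ∀ x : ℝ,
      (A - C * x) * (B * (ℓ - x)) = B * A * ℓ - (B * A + B * C * ℓ) * x + B * C * x ^ 2 :=
    fun x => by ring
  simp_rw [hpoly]
  rw [intervalIntegral.integral_add, intervalIntegral.integral_sub,
    intervalIntegral.integral_const, intervalIntegral.integral_const_mul,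
    intervalIntegral.integral_const_mul, integral_id, integral_pow]
  · simp only [smul_eq_mul]
    ring
  all_goals exact Continuous.intervalIntegrable (by fun_prop) _ _

/-- The integral over a bar of level `i` scales like `2 ^ (-4 i)`, which the stiffness factor
`16 ^ (i - 1)` of the critical case cancels: every level contributes the same constant minus its
`σ`-term. -/
theorem level_bending_term (c L E I s : ℝ) {i : ℕ} (hi : 1 ≤ i) :
    ((16:ℝ) ^ (i - 1) / (E * I)) *
      ∫ x in (0:ℝ)..(L * 2 ^ ((1:ℤ) - (i:ℤ))),
        (4 * c * L * (2 ^ (-(i:ℤ)) - s / 2 ^ (i - 1)) - c * x) *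
          (c * 2 ^ (-(i:ℤ)) * (L * 2 ^ ((1:ℤ) - (i:ℤ)) - x)) =
      5 * c ^ 2 * L ^ 3 / (12 * E * I) - (c ^ 2 * L ^ 3 / (E * I)) * s := by
  obtain ⟨k, rfl⟩ := Nat.exists_eq_add_of_le' hi
  have hpow : (2:ℝ) ^ k ≠ 0 := by positivity
  have h16 : (16:ℝ) ^ k = (2 ^ k) ^ 4 := by rw [← pow_mul, mul_comm, pow_mul]; norm_num
  rw [integral_sub_mul_mul_sub, Nat.add_sub_cancel, h16]
  push_cast
  rw [show (1:ℤ) - (k + 1) = -k by ring, zpow_neg, zpow_neg, zpow_natCast,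
    zpow_add₀ two_ne_zero, zpow_natCast, zpow_one]
  field_simp
  ring

theorem vertical_bending_term_critical_general (c L E I : ℝ) (z : ℝ) (P : ℕ) :
    ∑ i ∈ Finset.Icc 1 P, ((16:ℝ) ^ (i - 1) / (E * I)) *
      ∫ x in (0:ℝ)..(L * 2 ^ ((1:ℤ) - (i:ℤ))),
        (4 * c * L * (2 ^ (-(i:ℤ)) - distNearInt (2 ^ (i - 1) * z) / 2 ^ (i - 1)) - c * x) *
          (c * 2 ^ (-(i:ℤ)) * (L * 2 ^ ((1:ℤ) - (i:ℤ)) - x)) =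
    5 * c ^ 2 * L ^ 3 * P / (12 * E * I) -
      (c ^ 2 * L ^ 3 / (E * I)) *
        ∑ i ∈ Finset.Icc 1 P, distNearInt (2 ^ (i - 1) * z) := by
  rw [Finset.sum_congr rfl fun i hi => level_bending_term c L E I _ (Finset.mem_Icc.mp hi).1,
    Finset.sum_sub_distrib, Finset.sum_const, Nat.card_Icc, ← Finset.mul_sum, nsmul_eq_mul,
    Nat.add_sub_cancel]
  ring

/-- Bending-moment term of the PVW for vertical displacements of an end node at `z`
in a binary tree structure with `P` levels, in the critical case `a = 16`. -/
theorem vertical_bending_term_critical (c L E I : ℝ) (hc : 0 < c) (hL : 0 < L) (hE : 0 < E)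
    (hI : 0 < I) (z : ℝ) (P : ℕ) (hP : 1 ≤ P) :
    ∑ i ∈ Finset.Icc 1 P, ((16:ℝ) ^ (i - 1) / (E * I)) *
      ∫ x in (0:ℝ)..(L * 2 ^ ((1:ℤ) - (i:ℤ))),
        (4 * c * L * (2 ^ (-(i:ℤ)) - distNearInt (2 ^ (i - 1) * z) / 2 ^ (i - 1)) - c * x) *
          (c * 2 ^ (-(i:ℤ)) * (L * 2 ^ ((1:ℤ) - (i:ℤ)) - x)) =
    5 * c ^ 2 * L ^ 3 * P / (12 * E * I) -
      (c ^ 2 * L ^ 3 / (E * I)) *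
        ∑ i ∈ Finset.Icc 1 P, distNearInt (2 ^ (i - 1) * z) :=
  vertical_bending_term_critical_general c L E I z P
end

section
/- Let c, s, L, E, I, A, A*, G > 0 be reals, let a be a real with 1 < a < 16, let u, v > 0 be reals with u ≥ 4 or v ≥ 4, and let z ∈ ℝ. Then V(P,z) → +∞ as P → ∞; that is, the vertical displacements of the end nodes diverge and the structure collapses. -/
open Filter

/-- Vertical displacement per unit load of the end node located at `z` in a binary tree
structure with `P` levels, from the Principle of Virtual Work (bending + axial + shear). -/
noncomputable def Vdisp (c s L E I A A' G a u v z : ℝ) (P : ℕ) : ℝ :=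
  (∑ i ∈ Finset.Icc 1 P, (a ^ (i - 1) / (E * I)) *
      ∫ x in (0:ℝ)..(L * 2 ^ ((1:ℤ) - (i:ℤ))),
        (4 * c * L * (2 ^ (-(i:ℤ)) - distNearInt (2 ^ (i - 1) * z) / 2 ^ (i - 1)) - c * x) *
          (c * 2 ^ (-(i:ℤ)) * (L * 2 ^ ((1:ℤ) - (i:ℤ)) - x))) +
  (∑ i ∈ Finset.Icc 1 P,
      s ^ 2 * 2 ^ (-(i:ℤ)) * L * 2 ^ ((1:ℤ) - (i:ℤ)) * u ^ (i - 1) / (E * A)) +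
  (∑ i ∈ Finset.Icc 1 P,
      c ^ 2 * 2 ^ (-(i:ℤ)) * L * 2 ^ ((1:ℤ) - (i:ℤ)) * v ^ (i - 1) / (G * A'))


/-!
The level-`i` bending contribution is at most a constant times `(|a| / 16) ^ (i - 1)`: on a member
of length `ℓ = L·2^{1-i}` the moment `Q_i - c x` stays in `[-2cℓ, 2cℓ]`, because `0 ≤ σ ≤ 1/2`
keeps `Q_i` in `[0, 2cℓ]`. Since `|a| < 16` these contributions form a convergent geometric series,
so the bending part of `V(P, z)` is bounded below. The axial contribution of level `i` equals
`s²L/(2EA) · (u/4)^{i-1}` and the shear one `c²L/(2GA*) · (v/4)^{i-1}`; both are nonnegative, and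
if `u ≥ 4` (resp. `v ≥ 4`) the first (resp. second) is at least a positive constant, so their sum
grows at least linearly in `P`.
-/

open Finset

lemma distNearInt_nonneg (x : ℝ) : 0 ≤ distNearInt x :=
  le_ciInf fun _ => abs_nonneg _

lemma distNearInt_le_half (x : ℝ) : distNearInt x ≤ 1 / 2 := by
  have hbdd : BddBelow (Set.range fun k : ℤ => |x - k|) :=
    ⟨0, by rintro y ⟨k, rfl⟩; exact abs_nonneg _⟩
  calc distNearInt x ≤ |x - round x| := ciInf_le hbdd (round x)
    _ ≤ 1 / 2 := by simpa using abs_sub_round x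

lemma Finset.sum_Icc_one_eq_sum_range {M : Type*} [AddCommMonoid M] (f : ℕ → M) (n : ℕ) :
    ∑ i ∈ Icc 1 n, f i = ∑ j ∈ range n, f (j + 1) := by
  rw [← Ico_add_one_right_eq_Icc, sum_Ico_eq_sum_range]
  simp [add_comm]

lemma two_zpow_neg_natCast_succ (j : ℕ) : (2 : ℝ) ^ (-((j + 1 : ℕ) : ℤ)) = (2 ^ j)⁻¹ / 2 := by
  rw [zpow_neg, zpow_natCast, pow_succ, mul_inv, div_eq_mul_inv]

lemma two_zpow_one_sub_natCast_succ (j : ℕ) : (2 : ℝ) ^ ((1 : ℤ) - ((j + 1 : ℕ) : ℤ)) = (2 ^ j)⁻¹ := by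
  rw [show (1 : ℤ) - ((j + 1 : ℕ) : ℤ) = -(j : ℤ) by push_cast; ring, zpow_neg, zpow_natCast]

lemma abs_integral_sub_mul_mul_sub_le {Q c k ℓ : ℝ} (hc : 0 ≤ c) (hℓ : 0 ≤ ℓ) (hQ₀ : 0 ≤ Q)
    (hQ : Q ≤ 2 * c * ℓ) :
    |∫ x in (0 : ℝ)..ℓ, (Q - c * x) * (k * (ℓ - x))| ≤ 2 * c * |k| * ℓ ^ 3 := by
  have hbound : ∀ x ∈ Set.uIoc 0 ℓ, ‖(Q - c * x) * (k * (ℓ - x))‖ ≤ 2 * c * ℓ * (|k| * ℓ) := by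
    intro x hx
    rw [Set.uIoc_of_le hℓ] at hx
    obtain ⟨hx₀, hxℓ⟩ := hx
    have hcx : c * x ≤ c * ℓ := mul_le_mul_of_nonneg_left hxℓ hc
    rw [Real.norm_eq_abs, abs_mul, abs_mul, abs_of_nonneg (sub_nonneg.mpr hxℓ)]
    gcongr
    · exact abs_le.mpr ⟨by nlinarith, by nlinarith⟩
    · linarith
  have := intervalIntegral.norm_integral_le_of_norm_le_const hbound
  rw [Real.norm_eq_abs, sub_zero, abs_of_nonneg hℓ] at this
  linarith

noncomputable def bendingTerm (c L E I a z : ℝ) (i : ℕ) : ℝ :=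
  (a ^ (i - 1) / (E * I)) *
    ∫ x in (0:ℝ)..(L * 2 ^ ((1:ℤ) - (i:ℤ))),
      (4 * c * L * (2 ^ (-(i:ℤ)) - distNearInt (2 ^ (i - 1) * z) / 2 ^ (i - 1)) - c * x) *
        (c * 2 ^ (-(i:ℤ)) * (L * 2 ^ ((1:ℤ) - (i:ℤ)) - x))

/-- The shear contribution has the same shape as the axial one, with `c`, `G·A*`, `v` in place of
`s`, `E·A`, `u`. -/
noncomputable def axialTerm (b L D w : ℝ) (i : ℕ) : ℝ :=
  b * 2 ^ (-(i:ℤ)) * L * 2 ^ ((1:ℤ) - (i:ℤ)) * w ^ (i - 1) / D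

lemma Vdisp_eq (c s L E I A A' G a u v z : ℝ) (P : ℕ) :
    Vdisp c s L E I A A' G a u v z P =
      ∑ i ∈ Icc 1 P, bendingTerm c L E I a z i +
        (∑ i ∈ Icc 1 P, axialTerm (s ^ 2) L (E * A) u i +
          ∑ i ∈ Icc 1 P, axialTerm (c ^ 2) L (G * A') v i) :=
  add_assoc _ _ _

section Bending

variable {c L : ℝ} (E I a z : ℝ)

lemma abs_bendingTerm_succ_le (hc : 0 ≤ c) (hL : 0 ≤ L) (j : ℕ) :
    |bendingTerm c L E I a z (j + 1)| ≤ c ^ 2 * L ^ 3 / |E * I| * (|a| / 16) ^ j := by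
  rw [bendingTerm, two_zpow_neg_natCast_succ, two_zpow_one_sub_natCast_succ,
    Nat.add_sub_cancel]
  set ℓ := L * (2 ^ j : ℝ)⁻¹
  set d := distNearInt (2 ^ j * z)
  have hd₀ : 0 ≤ d := distNearInt_nonneg _
  have hd : d ≤ 1 / 2 := distNearInt_le_half _
  have hℓ : 0 ≤ ℓ := by positivity
  have hQ : 4 * c * L * ((2 ^ j : ℝ)⁻¹ / 2 - d / 2 ^ j) = 2 * c * ℓ * (1 - 2 * d) := by
    simp only [ℓ]; ring
  have hintegral := abs_integral_sub_mul_mul_sub_le (Q := 2 * c * ℓ * (1 - 2 * d))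
    (k := c * ((2 ^ j : ℝ)⁻¹ / 2)) hc hℓ (by nlinarith [mul_nonneg hc hℓ])
    (by nlinarith [mul_nonneg hc hℓ])
  rw [hQ]
  have h16 : (16 : ℝ) ^ j = (2 ^ j) ^ 4 := by rw [← pow_mul, mul_comm, pow_mul]; norm_num
  calc _ ≤ |a ^ j / (E * I)| * (2 * c * |c * ((2 ^ j : ℝ)⁻¹ / 2)| * ℓ ^ 3) := by
        rw [abs_mul]; exact mul_le_mul_of_nonneg_left hintegral (abs_nonneg _)
    _ = c ^ 2 * L ^ 3 / |E * I| * (|a| / 16) ^ j := by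
        rw [abs_div, abs_pow, abs_of_nonneg (by positivity : 0 ≤ c * ((2 ^ j : ℝ)⁻¹ / 2)),
          div_pow, h16]
        simp only [ℓ]
        field_simp

lemma sum_bendingTerm_ge (hc : 0 ≤ c) (hL : 0 ≤ L) (ha : |a| < 16) (P : ℕ) :
    -(c ^ 2 * L ^ 3 / |E * I| / (1 - |a| / 16)) ≤ ∑ i ∈ Icc 1 P, bendingTerm c L E I a z i := by
  have hr : |a| / 16 < 1 := by linarith
  have hgeom : ∑ j ∈ range P, (|a| / 16) ^ j ≤ 1 / (1 - |a| / 16) := by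
    simpa using geom_sum_Ico_le_of_lt_one (m := 0) (n := P) (by positivity) hr
  rw [sum_Icc_one_eq_sum_range]
  calc -(c ^ 2 * L ^ 3 / |E * I| / (1 - |a| / 16))
      ≤ -∑ j ∈ range P, c ^ 2 * L ^ 3 / |E * I| * (|a| / 16) ^ j := by
        rw [← mul_sum, div_eq_mul_one_div _ (1 - _)]
        gcongr
    _ ≤ -∑ j ∈ range P, |bendingTerm c L E I a z (j + 1)| :=
        neg_le_neg (sum_le_sum fun j _ => abs_bendingTerm_succ_le E I a z hc hL j)
    _ ≤ -|∑ j ∈ range P, bendingTerm c L E I a z (j + 1)| := neg_le_neg (abs_sum_le_sum_abs _ _)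
    _ ≤ _ := neg_abs_le _

end Bending

section Axial

variable {b L D w : ℝ}

lemma axialTerm_succ (j : ℕ) : axialTerm b L D w (j + 1) = b * L / (2 * D) * (w / 4) ^ j := by
  rw [axialTerm, two_zpow_neg_natCast_succ, two_zpow_one_sub_natCast_succ, Nat.add_sub_cancel,
    div_pow, show (4 : ℝ) ^ j = (2 ^ j) ^ 2 by rw [← pow_mul, mul_comm, pow_mul]; norm_num]
  field_simp

lemma axialTerm_nonneg (hb : 0 ≤ b) (hL : 0 ≤ L) (hD : 0 ≤ D) (hw : 0 ≤ w) (i : ℕ) :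
    0 ≤ axialTerm b L D w i := by
  unfold axialTerm
  positivity

lemma tendsto_sum_axialTerm_atTop (hb : 0 < b) (hL : 0 < L) (hD : 0 < D) (hw : 4 ≤ w) :
    Tendsto (fun P => ∑ i ∈ Icc 1 P, axialTerm b L D w i) atTop atTop := by
  have hK : 0 < b * L / (2 * D) := by positivity
  have hw' : 1 ≤ w / 4 := (one_le_div (by norm_num)).mpr hw
  refine tendsto_atTop_mono (fun P => ?_) (tendsto_natCast_atTop_atTop.atTop_mul_const hK)
  rw [sum_Icc_one_eq_sum_range]
  calc (P : ℝ) * (b * L / (2 * D)) = ∑ j ∈ range P, b * L / (2 * D) := by simp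
    _ ≤ ∑ j ∈ range P, axialTerm b L D w (j + 1) := sum_le_sum fun j _ => by
        rw [axialTerm_succ]
        exact le_mul_of_one_le_right hK.le (one_le_pow₀ hw')

end Axial

theorem vertical_displacement_collapse_general (c s L E I A A' G a u v : ℝ)
    (hc : 0 < c) (hs : 0 < s) (hL : 0 < L) (hE : 0 < E)
    (hA : 0 < A) (hA' : 0 < A') (hG : 0 < G)
    (ha1 : 1 < a) (ha16 : a < 16) (hu : 0 < u) (hv : 0 < v)
    (huv : 4 ≤ u ∨ 4 ≤ v) (z : ℝ) :
    Tendsto (fun P : ℕ => Vdisp c s L E I A A' G a u v z P) atTop atTop := by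
  have ha : |a| < 16 := abs_lt.mpr ⟨by linarith, ha16⟩
  simp only [Vdisp_eq]
  refine tendsto_atTop_add_left_of_le _ _ (sum_bendingTerm_ge E I a z hc.le hL.le ha) ?_
  rcases huv with hu4 | hv4
  · exact tendsto_atTop_add_right_of_le _ 0
      (tendsto_sum_axialTerm_atTop (by positivity) hL (by positivity) hu4)
      fun P => sum_nonneg fun i _ => axialTerm_nonneg (by positivity) hL.le (by positivity) hv.le i
  · exact tendsto_atTop_add_left_of_le _ 0
      (fun P => sum_nonneg fun i _ => axialTerm_nonneg (by positivity) hL.le (by positivity) hu.le i)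
      (tendsto_sum_axialTerm_atTop (by positivity) hL (by positivity) hv4)

/-- For `1 < a < 16` and `u ≥ 4` or `v ≥ 4`, the vertical displacements of the end nodes
diverge to `+∞` as the number of levels tends to infinity: the structure collapses. -/
theorem vertical_displacement_collapse (c s L E I A A' G a u v : ℝ)
    (hc : 0 < c) (hs : 0 < s) (hL : 0 < L) (hE : 0 < E) (hI : 0 < I)
    (hA : 0 < A) (hA' : 0 < A') (hG : 0 < G)
    (ha1 : 1 < a) (ha16 : a < 16) (hu : 0 < u) (hv : 0 < v)
    (huv : 4 ≤ u ∨ 4 ≤ v) (z : ℝ) :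
    Tendsto (fun P : ℕ => Vdisp c s L E I A A' G a u v z P) atTop atTop :=
  vertical_displacement_collapse_general c s L E I A A' G a u v hc hs hL hE hA hA' hG ha1 ha16 hu hv
    huv z
end
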